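/- arXiv:2003.03946 — 3 statements merged into one kernel-verified Lean document; each statement's English description precedes it below -/
import Mathlib

section
/- Let X = {0,1}^d for d ≥ 1, let z₀ = (0,...,0), and let e₁,...,e_d be the standard basis vectors. Suppose G is a family of subsets of X covering X, with a label ℓ(G) ∈ {0,1} for each G ∈ G, such that ℓ(G(z₀)) = 1 for any set containing z₀, ℓ(G) = 0 for any set containing some eᵢ, and any two sets with different labels are separated by a single coordinate feature (there exists a coordinate j such that all points of one set have j-th coordinate equal to some fixed bit b and all points of the other set have j-th coordinate equal to 1−b). Then |G| ≥ d + 1. -/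
theorem stmt_2 (d : ℕ) (hd : 1 ≤ d) (ι : Type*) [Fintype ι]
    (G : ι → Set (Fin d → Bool)) (ℓ : ι → Bool)
    (hcover : ∀ x : Fin d → Bool, ∃ i, x ∈ G i)
    (hz : ∀ i, (fun _ => false) ∈ G i → ℓ i = true)
    (he : ∀ i (a : Fin d), (fun l => decide (l = a)) ∈ G i → ℓ i = false)
    (hsep : ∀ i i', ℓ i ≠ ℓ i' →
      ∃ (j : Fin d) (b : Bool), (∀ x ∈ G i, x j = b) ∧ (∀ x ∈ G i', x j = !b)) :
    d + 1 ≤ Fintype.card ι := by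
  obtain ⟨i0, hi0⟩ := hcover (fun _ => false)
  choose f hf using fun a : Fin d => hcover (fun l => decide (l = a))
  have hℓf : ∀ a, ℓ (f a) = false := fun a => he (f a) a (hf a)
  have hℓ0 : ℓ i0 = true := hz i0 hi0
  have key : ∀ a i, ℓ i = false → (fun l => decide (l = a)) ∈ G i →
      ∀ a', (fun l => decide (l = a')) ∈ G i → a = a' := by
    intro a i hif hmem a' hmem'
    obtain ⟨j, b, h1, h2⟩ := hsep i i0 (by simp [hif, hℓ0])
    have hz0 : (false : Bool) = !b := h2 _ hi0
    have hb : b = true := by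
      cases b
      · exact absurd hz0 (by simp)
      · rfl
    have ha : decide (j = a) = b := h1 _ hmem
    have ha' : decide (j = a') = b := h1 _ hmem'
    rw [hb, decide_eq_true_eq] at ha ha'
    rw [← ha, ha']
  have hinj : Function.Injective (fun o : Option (Fin d) =>
      Option.elim o i0 f) := by
    intro o o' h
    match o, o' with
    | none, none => rfl
    | none, some a => simp only [Option.elim] at h
                      exact absurd (hℓf a) (by rw [← h, hℓ0]; simp)
    | some a, none => simp only [Option.elim] at h
                      exact absurd (hℓf a) (by rw [h, hℓ0]; simp)
    | some a, some a' =>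
      simp only [Option.elim] at h
      have := key a (f a) (hℓf a) (hf a) a' (h ▸ hf a')
      rw [this]
  calc d + 1 = Fintype.card (Option (Fin d)) := by simp
    _ ≤ Fintype.card ι := Fintype.card_le_of_injective _ hinj
end

section
/- Let δ ∈ (0, 1/e²], let k ≥ 1 be an integer, and let p ∈ [1/2, 1). Let S be a sum of k independent geometric random variables, each with success probability p (counting the number of trials until success). Then P[ S > (1/p) · 2k·log(1/δ) ] ≤ δ. -/
open MeasureTheory ProbabilityTheory

private lemma aux_geom_lintegral {Ω : Type*} [MeasurableSpace Ω] (μ : Measure Ω)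
    [IsProbabilityMeasure μ]
    (p : ℝ) (hp0 : 0 < p) (hq0 : 0 ≤ 1 - p)
    (T : Ω → ℕ) (hmeas : Measurable T)
    (hdist : ∀ n, μ {ω | T ω = n + 1} = ENNReal.ofReal (p * (1 - p) ^ n))
    (hzero : μ {ω | T ω = 0} = 0)
    (hr : (1 - p) * Real.exp p < 1) :
    ∫⁻ ω, ENNReal.ofReal (Real.exp (p * (T ω : ℝ))) ∂μ
      = ENNReal.ofReal (p * Real.exp p / (1 - (1 - p) * Real.exp p)) := by
  have hmap : ∀ n : ℕ, (μ.map T) {n} = μ {ω | T ω = n} := by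
    intro n
    rw [Measure.map_apply hmeas (measurableSet_singleton n)]
    rfl
  have h1 : ∫⁻ ω, ENNReal.ofReal (Real.exp (p * (T ω : ℝ))) ∂μ
      = ∑' n : ℕ, ENNReal.ofReal (Real.exp (p * (n : ℝ))) * μ {ω | T ω = n} := by
    have e1 : ∫⁻ ω, ENNReal.ofReal (Real.exp (p * (T ω : ℝ))) ∂μ
        = ∫⁻ n, ENNReal.ofReal (Real.exp (p * (n : ℝ))) ∂(μ.map T) :=
      (lintegral_map (f := fun n : ℕ => ENNReal.ofReal (Real.exp (p * (n : ℝ))))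
        measurable_from_nat hmeas).symm
    rw [e1, lintegral_countable']
    exact tsum_congr fun n => by rw [hmap]
  have hsplit := tsum_eq_zero_add'
    (f := fun n : ℕ => ENNReal.ofReal (Real.exp (p * (n : ℝ))) * μ {ω | T ω = n})
    ENNReal.summable
  rw [h1, hsplit]
  beta_reduce
  rw [hzero, mul_zero, zero_add]
  have h2 : ∀ n : ℕ, ENNReal.ofReal (Real.exp (p * ((n + 1 : ℕ) : ℝ))) * μ {ω | T ω = n + 1}
      = ENNReal.ofReal (p * Real.exp p * ((1 - p) * Real.exp p) ^ n) := by
    intro n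
    rw [hdist, ← ENNReal.ofReal_mul (Real.exp_pos _).le]
    congr 1
    rw [mul_pow, ← Real.exp_nat_mul]
    push_cast
    rw [show p * ((n : ℝ) + 1) = (n : ℝ) * p + p by ring, Real.exp_add]
    ring
  rw [tsum_congr h2]
  rw [← ENNReal.ofReal_tsum_of_nonneg (fun n => by positivity)
      ((summable_geometric_of_lt_one (by positivity) hr).mul_left _)]
  rw [tsum_mul_left, tsum_geometric_of_lt_one (by positivity) hr, div_eq_mul_inv]

private lemma aux_M_le_exp_two (p : ℝ) (h2 : 1/2 ≤ p) (h1 : p < 1) :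
    p * Real.exp p / (1 - (1-p) * Real.exp p) ≤ Real.exp 2 := by
  have hp0 : 0 < p := by linarith
  have hr : (1-p) * Real.exp p < 1 := by
    have h := Real.add_one_lt_exp (neg_ne_zero.mpr hp0.ne')
    have := Real.exp_pos p
    nlinarith [Real.exp_neg p, mul_pos (Real.exp_pos (-p)) (Real.exp_pos p),
      (by rw [← Real.exp_add]; simp : Real.exp (-p) * Real.exp p = 1)]
  rw [div_le_iff₀ (by linarith)]
  set E := Real.exp 1 with hEdef
  set B := Real.exp (1/2) with hBdef
  have hB2 : B * B = E := by rw [hBdef, ← Real.exp_add]; congr 1; ring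
  have hE2 : Real.exp 2 = E * E := by rw [hEdef, ← Real.exp_add]; congr 1; ring
  have hEgt : (2.7182818283 : ℝ) < E := Real.exp_one_gt_d9
  have hElt : E < 2.7182818286 := Real.exp_one_lt_d9
  have hBpos : 0 < B := Real.exp_pos _
  have hBgt : (1.6487 : ℝ) < B := by nlinarith
  have htangent : Real.exp (3/2 : ℝ) * (3/2 - p) ≤ Real.exp (2 - p) := by
    have h := Real.add_one_le_exp (1/2 - p)
    have h32 : Real.exp (3/2 : ℝ) * Real.exp (1/2 - p) = Real.exp (2 - p) := by
      rw [← Real.exp_add]; congr 1; ring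
    nlinarith [Real.exp_pos (3/2 : ℝ)]
  have hE32 : Real.exp (3/2 : ℝ) = E * B := by
    rw [hEdef, hBdef, ← Real.exp_add]; congr 1; ring
  have key : p + Real.exp 2 * (1 - p) ≤ Real.exp (2 - p) := by
    have h3 : E * E - E * B - 1 > 0 := by nlinarith
    have := mul_nonneg (sub_nonneg.2 h2) h3.le
    nlinarith [htangent]
  have hEsplit : Real.exp (2 - p) * Real.exp p = Real.exp 2 := by
    rw [← Real.exp_add]; congr 1; ring
  nlinarith [Real.exp_pos p, mul_le_mul_of_nonneg_right key (Real.exp_pos p).le]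

theorem stmt_5 {Ω : Type*} [MeasurableSpace Ω] (μ : Measure Ω) [IsProbabilityMeasure μ]
    (δ p : ℝ) (hδ : δ ∈ Set.Ioc (0:ℝ) (1 / Real.exp 2)) (k : ℕ) (hk : 1 ≤ k)
    (hp : p ∈ Set.Ico (1/2 : ℝ) 1)
    (T : Fin k → Ω → ℕ) (hmeas : ∀ i, Measurable (T i))
    (hindep : iIndepFun T μ)
    (hdist : ∀ i n, μ {ω | T i ω = n + 1} = ENNReal.ofReal (p * (1 - p) ^ n))
    (hzero : ∀ i, μ {ω | T i ω = 0} = 0) :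
    μ {ω | ((∑ i, T i ω : ℕ) : ℝ) > (1 / p) * (2 * k * Real.log (1 / δ))}
      ≤ ENNReal.ofReal δ := by
  obtain ⟨hδ0, hδe⟩ := hδ
  obtain ⟨hp2, hp1⟩ := hp
  have hp0 : 0 < p := by linarith
  have hq0 : (0:ℝ) ≤ 1 - p := by linarith
  have hr : (1 - p) * Real.exp p < 1 := by
    have h := Real.add_one_lt_exp (neg_ne_zero.mpr hp0.ne')
    nlinarith [Real.exp_pos p, Real.exp_pos (-p),
      (by rw [← Real.exp_add]; simp : Real.exp (-p) * Real.exp p = 1)]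
  set M : ℝ := p * Real.exp p / (1 - (1 - p) * Real.exp p) with hMdef
  have hMpos : 0 < M := div_pos (by positivity) (by linarith)
  set L : ℝ := Real.log (1 / δ) with hLdef
  have hL2 : (2:ℝ) ≤ L := by
    rw [hLdef, Real.le_log_iff_exp_le (by positivity)]
    rw [le_div_iff₀ hδ0]
    nlinarith [Real.exp_pos 2,
      (by field_simp : (1 / Real.exp 2) * Real.exp 2 = 1)]
  set Y : Fin k → Ω → ℝ := fun i ω => ((T i ω : ℕ) : ℝ) with hYdef
  have hYmeas : ∀ i, Measurable (Y i) := fun i => measurable_from_nat.comp (hmeas i)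
  have hYindep : iIndepFun Y μ :=
    hindep.comp (fun _ => (Nat.cast : ℕ → ℝ)) (fun _ => measurable_from_nat)
  have hlint : ∀ i, ∫⁻ ω, ENNReal.ofReal (Real.exp (p * Y i ω)) ∂μ = ENNReal.ofReal M :=
    fun i => aux_geom_lintegral μ p hp0 hq0 (T i) (hmeas i) (hdist i) (hzero i) hr
  have hint : ∀ i, Integrable (fun ω => Real.exp (p * Y i ω)) μ := by
    intro i
    refine ⟨(((hYmeas i).const_mul p).exp).aestronglyMeasurable, ?_⟩
    rw [hasFiniteIntegral_iff_ofReal (ae_of_all _ fun ω => (Real.exp_pos _).le)]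
    rw [hlint i]
    exact ENNReal.ofReal_lt_top
  have hmgf : ∀ i, mgf (Y i) μ p = M := by
    intro i
    have hnn : 0 ≤ᵐ[μ] fun ω => Real.exp (p * Y i ω) :=
      ae_of_all _ fun ω => (Real.exp_pos _).le
    have h := ofReal_integral_eq_lintegral_ofReal (hint i) hnn
    rw [hlint i] at h
    have h0 : 0 ≤ ∫ ω, Real.exp (p * Y i ω) ∂μ :=
      integral_nonneg fun ω => (Real.exp_pos _).le
    exact (ENNReal.ofReal_eq_ofReal_iff h0 hMpos.le).1 h
  set S : Ω → ℝ := ∑ i, Y i with hSdef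
  have hintS : Integrable (fun ω => Real.exp (p * S ω)) μ :=
    hYindep.integrable_exp_mul_sum hYmeas (fun i _ => hint i)
  have hch := measure_ge_le_exp_mul_mgf (μ := μ) (X := S) (t := p)
    ((1/p) * (2 * k * L)) hp0.le hintS
  have hmgfS : mgf S μ p = M ^ k := by
    rw [hSdef, hYindep.mgf_sum hYmeas]
    simp [hmgf]
  rw [hmgfS] at hch
  have hbound : Real.exp (-p * ((1/p) * (2 * k * L))) * M ^ k ≤ δ := by
    have hpN : p * ((1/p) * (2 * (k:ℝ) * L)) = 2 * k * L := by field_simp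
    have hk1 : (1:ℝ) ≤ k := by exact_mod_cast hk
    have hMk : M ^ k ≤ Real.exp ((k:ℝ) * L) := by
      calc M ^ k ≤ (Real.exp L) ^ k := by
            apply pow_le_pow_left₀ hMpos.le
            exact (aux_M_le_exp_two p hp2 hp1).trans (Real.exp_le_exp.2 hL2)
        _ = Real.exp ((k:ℝ) * L) := by rw [← Real.exp_nat_mul]
    calc Real.exp (-p * ((1/p) * (2 * k * L))) * M ^ k
        ≤ Real.exp (-(2 * k * L)) * Real.exp ((k:ℝ) * L) := by
          rw [neg_mul, hpN]
          exact mul_le_mul_of_nonneg_left hMk (Real.exp_pos _).le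
      _ = Real.exp (-((k:ℝ) * L)) := by rw [← Real.exp_add]; congr 1; ring
      _ ≤ Real.exp (-L) := Real.exp_le_exp.2 (by nlinarith)
      _ = δ := by rw [hLdef, one_div, Real.log_inv, neg_neg, Real.exp_log hδ0]
  have hsub : {ω | ((∑ i, T i ω : ℕ) : ℝ) > (1 / p) * (2 * k * L)}
      ⊆ {ω | (1/p) * (2 * k * L) ≤ S ω} := by
    intro ω hω
    have hSω : S ω = ((∑ i, T i ω : ℕ) : ℝ) := by
      rw [hSdef]
      push_cast
      simp [hYdef, Finset.sum_apply]
    rw [Set.mem_setOf_eq, hSω]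
    exact le_of_lt hω
  calc μ {ω | ((∑ i, T i ω : ℕ) : ℝ) > (1 / p) * (2 * k * L)}
      ≤ μ {ω | (1/p) * (2 * k * L) ≤ S ω} := measure_mono hsub
    _ ≤ ENNReal.ofReal δ := by
        rw [ENNReal.le_ofReal_iff_toReal_le (measure_ne_top _ _) hδ0.le]
        exact hch.trans hbound
end

section
/- Let δ ∈ (0, 1/e²], let k ≥ 4·log(1/δ) be an integer, and let p ∈ [1/2, 1). Let S be a sum of k independent geometric random variables each with success probability p. Then P[ S > (1/p)·(2k + 4·√(k·log(1/δ))) ] ≤ δ. -/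
open MeasureTheory ProbabilityTheory

lemma exp_half_bound (p : ℝ) : Real.exp (p/2) * (1 - p/2) ≤ 1 := by
  have h := Real.add_one_le_exp (-(p/2))
  have h2 : Real.exp (p/2) * Real.exp (-(p/2)) = 1 := by
    rw [← Real.exp_add]; simp
  nlinarith [Real.exp_pos (p/2),
    mul_le_mul_of_nonneg_left h (Real.exp_pos (p/2)).le]

lemma geom_lintegral_bound {Ω : Type*} [MeasurableSpace Ω] (μ : Measure Ω)
    [IsProbabilityMeasure μ] (p : ℝ) (hp : p ∈ Set.Ico (1/2 : ℝ) 1)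
    (T : Ω → ℕ) (hm : Measurable T)
    (hdist : ∀ n, μ {ω | T ω = n + 1} = ENNReal.ofReal (p * (1 - p) ^ n))
    (hzero : μ {ω | T ω = 0} = 0) :
    ∫⁻ ω, ENNReal.ofReal (Real.exp ((p/2) * (T ω : ℝ))) ∂μ ≤ ENNReal.ofReal 2 := by
  obtain ⟨hp1, hp2⟩ := hp
  have hp0 : (0:ℝ) < p := by linarith
  set t := p/2 with ht
  have hq0 : (0:ℝ) ≤ 1 - p := by linarith
  have het : Real.exp t * (1 - t) ≤ 1 := exp_half_bound p
  have hr1 : (1 - p) * Real.exp t < 1 := by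
    have : 1 - p < 1 - t := by simp only [ht]; linarith
    nlinarith [Real.exp_pos t]
  have hg : Measurable (fun n : ℕ => ENNReal.ofReal (Real.exp (t * (n:ℝ)))) :=
    measurable_from_top
  calc ∫⁻ ω, ENNReal.ofReal (Real.exp (t * (T ω : ℝ))) ∂μ
      = ∫⁻ n, ENNReal.ofReal (Real.exp (t * (n:ℝ))) ∂(μ.map T) := (lintegral_map hg hm).symm
    _ = ∑' n : ℕ, ENNReal.ofReal (Real.exp (t * (n:ℝ))) * (μ.map T) {n} :=
        lintegral_countable' _
    _ = ∑' n : ℕ, ENNReal.ofReal (Real.exp (t * (n:ℝ))) * μ {ω | T ω = n} := by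
        congr 1; ext n
        rw [Measure.map_apply hm (measurableSet_singleton n)]
        rfl
    _ ≤ ENNReal.ofReal 2 := by
        set a : ℕ → ENNReal := fun n => ENNReal.ofReal (Real.exp (t * (n:ℝ))) * μ {ω | T ω = n} with ha
        rw [tsum_eq_zero_add' (f := a) ENNReal.summable]
        have ha0 : a 0 = 0 := by simp [ha, hzero]
        rw [ha0, zero_add]
        simp only [ha]
        have hterm : ∀ n : ℕ,
            ENNReal.ofReal (Real.exp (t * ((n+1 : ℕ):ℝ))) * μ {ω | T ω = n + 1}
            = ENNReal.ofReal ((p * Real.exp t) * ((1 - p) * Real.exp t)^n) := by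
          intro n
          rw [hdist n, ← ENNReal.ofReal_mul (Real.exp_pos _).le]
          congr 1
          push_cast
          have he : Real.exp (t * ((n:ℝ) + 1)) = Real.exp t * Real.exp t ^ n := by
            rw [← Real.exp_nat_mul, ← Real.exp_add]; ring_nf
          rw [he, mul_pow]; ring
        simp_rw [hterm]
        rw [← ENNReal.ofReal_tsum_of_nonneg (fun n => by positivity)
          ((summable_geometric_of_lt_one (by positivity) hr1).mul_left _)]
        apply ENNReal.ofReal_le_ofReal
        rw [tsum_mul_left, tsum_geometric_of_lt_one (by positivity) hr1]
        have hpos : (0:ℝ) < 1 - (1 - p) * Real.exp t := by linarith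
        have : p * Real.exp t ≤ 2 * (1 - (1 - p) * Real.exp t) := by
          have h2 : Real.exp t * (2 - p) ≤ 2 := by
            have : (2:ℝ) - p = 2 * (1 - t) := by simp [ht]; ring
            rw [this]; nlinarith
          nlinarith [Real.exp_pos t]
        calc p * Real.exp t * (1 - (1 - p) * Real.exp t)⁻¹
            ≤ 2 * (1 - (1 - p) * Real.exp t) * (1 - (1 - p) * Real.exp t)⁻¹ := by
              apply mul_le_mul_of_nonneg_right this (inv_nonneg.2 hpos.le)
          _ = 2 := by rw [mul_assoc, mul_inv_cancel₀ hpos.ne', mul_one]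

theorem stmt_6 {Ω : Type*} [MeasurableSpace Ω] (μ : Measure Ω) [IsProbabilityMeasure μ]
    (δ p : ℝ) (hδ : δ ∈ Set.Ioc (0:ℝ) (1 / Real.exp 2)) (k : ℕ)
    (hk : 4 * Real.log (1 / δ) ≤ (k : ℝ))
    (hp : p ∈ Set.Ico (1/2 : ℝ) 1)
    (T : Fin k → Ω → ℕ) (hmeas : ∀ i, Measurable (T i))
    (hindep : iIndepFun T μ)
    (hdist : ∀ i n, μ {ω | T i ω = n + 1} = ENNReal.ofReal (p * (1 - p) ^ n))
    (hzero : ∀ i, μ {ω | T i ω = 0} = 0) :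
    μ {ω | ((∑ i, T i ω : ℕ) : ℝ) >
        (1 / p) * (2 * k + 4 * Real.sqrt (k * Real.log (1 / δ)))}
      ≤ ENNReal.ofReal δ := by
  obtain ⟨hδ0, hδ1⟩ := hδ
  obtain ⟨hp1, hp2⟩ := hp
  have hp0 : (0:ℝ) < p := by linarith
  set t := p/2 with ht
  have ht0 : 0 < t := by positivity
  set L := Real.log (1 / δ) with hL
  have hL2 : (2:ℝ) ≤ L := by
    have h1 : Real.exp 2 ≤ 1 / δ := by
      rw [le_div_iff₀ hδ0]
      calc Real.exp 2 * δ ≤ Real.exp 2 * (1 / Real.exp 2) := by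
            exact mul_le_mul_of_nonneg_left hδ1 (Real.exp_pos 2).le
        _ = 1 := by field_simp
    calc (2:ℝ) = Real.log (Real.exp 2) := (Real.log_exp 2).symm
      _ ≤ L := Real.log_le_log (Real.exp_pos 2) h1
  have hL0 : (0:ℝ) < L := by linarith
  set r := Real.sqrt (k * L) with hr
  have hrL : 2 * L ≤ r := by
    have h1 : (2*L)^2 ≤ (k:ℝ) * L := by nlinarith
    calc 2 * L = Real.sqrt ((2*L)^2) := by
          rw [Real.sqrt_sq (by linarith)]
      _ ≤ r := Real.sqrt_le_sqrt h1
  set ε := (1 / p) * (2 * (k:ℝ) + 4 * r) with hε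
  set X : Fin k → Ω → ℝ := fun i ω => (T i ω : ℝ) with hX
  have hXmeas : ∀ i, Measurable (X i) := fun i => measurable_from_top.comp (hmeas i)
  have hXindep : iIndepFun X μ :=
    hindep.comp (fun _ => (Nat.cast : ℕ → ℝ)) (fun _ => measurable_from_top)
  -- per-variable lintegral bound
  have hli : ∀ i, ∫⁻ ω, ENNReal.ofReal (Real.exp (t * X i ω)) ∂μ ≤ ENNReal.ofReal 2 :=
    fun i => geom_lintegral_bound μ p ⟨hp1, hp2⟩ (T i) (hmeas i) (hdist i) (hzero i)
  have hint : ∀ i, Integrable (fun ω => Real.exp (t * X i ω)) μ := by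
    intro i
    refine ⟨(((hXmeas i).const_mul t).exp).aestronglyMeasurable, ?_⟩
    rw [hasFiniteIntegral_iff_ofReal (Filter.Eventually.of_forall fun ω => (Real.exp_pos _).le)]
    exact lt_of_le_of_lt (hli i) ENNReal.ofReal_lt_top
  have hmgf : ∀ i, mgf (X i) μ t ≤ 2 := by
    intro i
    rw [mgf, integral_eq_lintegral_of_nonneg_ae
      (Filter.Eventually.of_forall fun ω => (Real.exp_pos _).le)
      (((hXmeas i).const_mul t).exp).aestronglyMeasurable]
    calc (∫⁻ ω, ENNReal.ofReal (Real.exp (t * X i ω)) ∂μ).toReal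
        ≤ (ENNReal.ofReal 2).toReal := ENNReal.toReal_mono ENNReal.ofReal_ne_top (hli i)
      _ = 2 := by rw [ENNReal.toReal_ofReal]; norm_num
  have hintS : Integrable (fun ω => Real.exp (t * (∑ i, X i) ω)) μ :=
    hXindep.integrable_exp_mul_sum hXmeas (fun i _ => hint i)
  have hchern := measure_ge_le_exp_mul_mgf (X := ∑ i, X i) (μ := μ) ε ht0.le hintS
  have hprod : mgf (∑ i, X i) μ t ≤ 2 ^ k := by
    rw [hXindep.mgf_sum hXmeas]
    calc ∏ i, mgf (X i) μ t ≤ ∏ _i : Fin k, (2:ℝ) :=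
          Finset.prod_le_prod (fun i _ => mgf_nonneg) (fun i _ => hmgf i)
      _ = 2 ^ k := by simp
  -- the numeric bound
  have hnum : Real.exp (-t * ε) * 2 ^ k ≤ δ := by
    have htε : t * ε = (k:ℝ) + 2 * r := by
      rw [hε, ht, one_div, show p / 2 * (p⁻¹ * (2 * (k:ℝ) + 4 * r)) = (p * p⁻¹) * ((k:ℝ) + 2 * r) by ring,
        mul_inv_cancel₀ hp0.ne', one_mul]
    have h2k : (2:ℝ)^k ≤ Real.exp k := by
      calc (2:ℝ)^k ≤ (Real.exp 1)^k := by
            apply pow_le_pow_left₀ (by norm_num)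
            linarith [Real.add_one_le_exp (1:ℝ)]
          _ = Real.exp k := by rw [← Real.exp_nat_mul]; ring_nf
    have hδeq : δ = Real.exp (-L) := by
      rw [hL, one_div, Real.log_inv, neg_neg, Real.exp_log hδ0]
    calc Real.exp (-t * ε) * 2 ^ k ≤ Real.exp (-t * ε) * Real.exp k :=
          mul_le_mul_of_nonneg_left h2k (Real.exp_pos _).le
      _ = Real.exp (-(t*ε) + k) := by rw [← Real.exp_add]; ring_nf
      _ ≤ Real.exp (-L) := by
          apply Real.exp_le_exp.2
          rw [htε]; linarith
      _ = δ := hδeq.symm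
  -- assemble
  have hset : {ω | ((∑ i, T i ω : ℕ) : ℝ) > ε} ⊆ {ω | ε ≤ (∑ i, X i) ω} := by
    intro ω hω
    simp only [Set.mem_setOf_eq] at *
    have : ((∑ i, T i ω : ℕ) : ℝ) = (∑ i, X i) ω := by
      simp [hX, Nat.cast_sum]
    linarith [hω, this.symm.le]
  calc μ {ω | ((∑ i, T i ω : ℕ) : ℝ) > ε} ≤ μ {ω | ε ≤ (∑ i, X i) ω} := measure_mono hset
    _ = ENNReal.ofReal ((μ {ω | ε ≤ (∑ i, X i) ω}).toReal) :=
        (ENNReal.ofReal_toReal (measure_ne_top μ _)).symm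
    _ ≤ ENNReal.ofReal δ := by
        apply ENNReal.ofReal_le_ofReal
        calc (μ {ω | ε ≤ (∑ i, X i) ω}).toReal ≤ Real.exp (-t * ε) * mgf (∑ i, X i) μ t := hchern
          _ ≤ Real.exp (-t * ε) * 2 ^ k :=
              mul_le_mul_of_nonneg_left hprod (Real.exp_pos _).le
          _ ≤ δ := hnum
end
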